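/- Let f, g ∈ ℝ[y][x] be polynomials in x with coefficients in ℝ[y], and let b ∈ ℝ be such that the leading coefficients of f and g in x do not vanish at b. If the resultant res(f, g, x), evaluated at y = b, is nonzero, then the univariate polynomials f(b, x) and g(b, x) have no common real root. -/
import Mathlib


open Polynomial

/-- The Sylvester matrix of `f` and `g` (w.r.t. their natural degrees). -/
noncomputable def sylvesterMatrix {R : Type*} [CommRing R] (f g : Polynomial R) :
    Matrix (Fin (g.natDegree + f.natDegree)) (Fin (g.natDegree + f.natDegree)) R :=
  Matrix.of fun i j =>
    if (i : ℕ) < g.natDegree then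
      -- a row of (shifted) coefficients of `f`
      if (i : ℕ) ≤ (j : ℕ) ∧ (j : ℕ) ≤ (i : ℕ) + f.natDegree then
        f.coeff (f.natDegree - ((j : ℕ) - (i : ℕ)))
      else 0
    else
      -- a row of (shifted) coefficients of `g`
      if (i : ℕ) - g.natDegree ≤ (j : ℕ) ∧ (j : ℕ) ≤ (i : ℕ) - g.natDegree + g.natDegree then
        g.coeff (g.natDegree - ((j : ℕ) - ((i : ℕ) - g.natDegree)))
      else 0

/-- The Sylvester resultant of `f` and `g`. -/
noncomputable def res {R : Type*} [CommRing R] (f g : Polynomial R) : R :=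
  (sylvesterMatrix f g).det

/-- The discriminant `(-1)^(m(m-1)/2) res(f, f')` as in the paper. -/
noncomputable def disc {R : Type*} [CommRing R] (f : Polynomial R) : R :=
  (-1) ^ (f.natDegree * (f.natDegree - 1) / 2) * res f (derivative f)

/-- Generic row computation: a shifted coefficient row dotted with the
vector of powers of a root gives zero. -/
lemma sylv_row_aux (p : Polynomial ℝ) (x : ℝ) (hp : p.eval x = 0) (N s : ℕ)
    (hs : s + p.natDegree ≤ N - 1) (hN : 1 ≤ N) :
    (∑ j ∈ Finset.range N,
      (if s ≤ j ∧ j ≤ s + p.natDegree then p.coeff (p.natDegree - (j - s)) else 0)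
        * x ^ (N - 1 - j)) = 0 := by
  set m := p.natDegree with hm
  have hsub : Finset.Icc s (s + m) ⊆ Finset.range N := by
    intro j hj
    simp only [Finset.mem_Icc] at hj
    simp only [Finset.mem_range]
    omega
  rw [← Finset.sum_subset hsub (by
    intro j _ hj
    simp only [Finset.mem_Icc] at hj
    rw [if_neg hj, zero_mul])]
  have hIcc : Finset.Icc s (s + m) = Finset.Ico s (s + m + 1) := by
    rw [Nat.Icc_eq_range', Nat.Ico_eq_range']
  rw [hIcc, Finset.sum_Ico_eq_sum_range]
  have hrw : ∀ k ∈ Finset.range (s + m + 1 - s),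
      (if s ≤ s + k ∧ s + k ≤ s + m then p.coeff (m - (s + k - s)) else 0) * x ^ (N - 1 - (s + k))
      = p.coeff (m - k) * x ^ (N - 1 - s - k) := by
    intro k hk
    simp only [Finset.mem_range] at hk
    rw [if_pos ⟨by omega, by omega⟩]
    congr 2
    · omega
    · omega
  rw [Finset.sum_congr rfl hrw]
  have h1 : s + m + 1 - s = m + 1 := by omega
  rw [h1]
  have h2 : ∑ k ∈ Finset.range (m + 1), p.coeff (m - k) * x ^ (N - 1 - s - k)
      = ∑ k ∈ Finset.range (m + 1), p.coeff k * x ^ (N - 1 - s - (m - k)) := by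
    have := Finset.sum_range_reflect (fun k => p.coeff k * x ^ (N - 1 - s - (m - k))) (m + 1)
    simp only [Nat.add_sub_cancel] at this
    rw [← this]
    apply Finset.sum_congr rfl
    intro k hk
    simp only [Finset.mem_range] at hk
    congr 2
    omega
  rw [h2]
  have h3 : ∀ k ∈ Finset.range (m + 1),
      p.coeff k * x ^ (N - 1 - s - (m - k)) = (p.coeff k * x ^ k) * x ^ (N - 1 - s - m) := by
    intro k hk
    simp only [Finset.mem_range] at hk
    have he : N - 1 - s - (m - k) = k + (N - 1 - s - m) := by omega
    rw [mul_assoc, ← pow_add, he]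
  rw [Finset.sum_congr rfl h3, ← Finset.sum_mul]
  have he : ∑ k ∈ Finset.range (m + 1), p.coeff k * x ^ k = p.eval x := by
    rw [eval_eq_sum_range]
  rw [he, hp, zero_mul]

/-- If `p` and `q` have a common root (and `p ≠ 0`), the resultant vanishes. -/
lemma res_eq_zero_of_common_root (p q : Polynomial ℝ) (x : ℝ) (hp0 : p ≠ 0)
    (hp : p.eval x = 0) (hq : q.eval x = 0) : res p q = 0 := by
  by_cases hN : q.natDegree + p.natDegree = 0
  · exfalso
    have hm0 : p.natDegree = 0 := by omega
    have hc : p = C (p.coeff 0) := p.eq_C_of_natDegree_eq_zero hm0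
    rw [hc] at hp
    simp only [eval_C] at hp
    exact hp0 (by rw [hc, hp, map_zero])
  · by_contra hdet
    have hN1 : 1 ≤ q.natDegree + p.natDegree := by omega
    set v : Fin (q.natDegree + p.natDegree) → ℝ :=
      fun j => x ^ (q.natDegree + p.natDegree - 1 - (j : ℕ)) with hv
    have hmv : (sylvesterMatrix p q).mulVec v = 0 := by
      funext i
      simp only [Matrix.mulVec, dotProduct, sylvesterMatrix, Matrix.of_apply,
        Pi.zero_apply, hv]
      by_cases hi : (i : ℕ) < q.natDegree
      · simp only [hi, if_true]
        rw [Fin.sum_univ_eq_sum_range (fun j =>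
          (if (i : ℕ) ≤ j ∧ j ≤ (i : ℕ) + p.natDegree then
            p.coeff (p.natDegree - (j - (i : ℕ))) else 0)
            * x ^ (q.natDegree + p.natDegree - 1 - j))]
        exact sylv_row_aux p x hp _ _ (by omega) hN1
      · simp only [hi, if_false]
        rw [Fin.sum_univ_eq_sum_range (fun j =>
          (if (i : ℕ) - q.natDegree ≤ j ∧ j ≤ (i : ℕ) - q.natDegree + q.natDegree then
            q.coeff (q.natDegree - (j - ((i : ℕ) - q.natDegree))) else 0)
            * x ^ (q.natDegree + p.natDegree - 1 - j))]
        have hi2 := i.isLt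
        exact sylv_row_aux q x hq _ _ (by omega) hN1
    have hvz := Matrix.eq_zero_of_mulVec_eq_zero hdet hmv
    have hlast : v ⟨q.natDegree + p.natDegree - 1, by omega⟩ = 1 := by
      simp [hv]
    rw [hvz] at hlast
    simp at hlast

lemma res_map (f g : Polynomial (Polynomial ℝ)) (φ : Polynomial ℝ →+* ℝ)
    (hf : φ f.leadingCoeff ≠ 0) (hg : φ g.leadingCoeff ≠ 0) :
    res (f.map φ) (g.map φ) = φ (res f g) := by
  have hm : (f.map φ).natDegree = f.natDegree := natDegree_map_of_leadingCoeff_ne_zero φ hf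
  have hn : (g.map φ).natDegree = g.natDegree := natDegree_map_of_leadingCoeff_ne_zero φ hg
  have hN : g.natDegree + f.natDegree = (g.map φ).natDegree + (f.map φ).natDegree := by
    rw [hm, hn]
  have hmat : sylvesterMatrix (f.map φ) (g.map φ)
      = ((sylvesterMatrix f g).map φ).submatrix (finCongr hN.symm) (finCongr hN.symm) := by
    ext i j
    simp only [sylvesterMatrix, Matrix.submatrix_apply, Matrix.map_apply, Matrix.of_apply,
      finCongr_apply, Fin.coe_cast, hm, hn, coeff_map]
    split_ifs <;> simp
  rw [res, hmat, Matrix.det_submatrix_equiv_self, res, RingHom.map_det, RingHom.mapMatrix_apply]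

theorem stmt_15 (f g : Polynomial (Polynomial ℝ)) (b : ℝ)
    (hf : (f.leadingCoeff).eval b ≠ 0) (hg : (g.leadingCoeff).eval b ≠ 0)
    (hres : (res f g).eval b ≠ 0) :
    ∀ x : ℝ, ¬((f.map (Polynomial.evalRingHom b)).eval x = 0 ∧
              (g.map (Polynomial.evalRingHom b)).eval x = 0) := by
  rintro x ⟨hfx, hgx⟩
  have hf' : (evalRingHom b) f.leadingCoeff ≠ 0 := by rwa [coe_evalRingHom]
  have hg' : (evalRingHom b) g.leadingCoeff ≠ 0 := by rwa [coe_evalRingHom]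
  have hF0 : f.map (evalRingHom b) ≠ 0 := by
    intro h
    apply hf'
    have h2 : (f.map (evalRingHom b)).coeff f.natDegree = 0 := by rw [h, Polynomial.coeff_zero]
    rw [coeff_map] at h2
    rwa [Polynomial.leadingCoeff]
  have h0 := res_eq_zero_of_common_root _ _ x hF0 hfx hgx
  rw [res_map f g (evalRingHom b) hf' hg'] at h0
  exact hres (by rwa [coe_evalRingHom] at h0)
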